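/- arXiv:1804.05491 — 5 statements merged into one kernel-verified Lean document; each statement's English description precedes it below -/
import Mathlib

section
/- Let n ≥ 3 and let A = (a_{ij}) be an n×n generic Cartan matrix that is not symmetrizable. Then there exist indices i < j < k in {1,…,n} such that the 3×3 principal submatrix A_{{i,j,k}} = (a_{pq})_{p,q∈{i,j,k}} is not symmetrizable. -/
/-- An `n × n` integer matrix is a (generalized) Cartan matrix. -/
def IsCartanMatrix {n : ℕ} (A : Matrix (Fin n) (Fin n) ℤ) : Prop :=
  (∀ i, A i i = 2) ∧ (∀ i j, i ≠ j → A i j ≤ 0) ∧ (∀ i j, A i j = 0 ↔ A j i = 0)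

/-- A Cartan matrix is generic if `a_{ij} * a_{ji} ≥ 4` for all `i ≠ j`. -/
def IsGenericCartan {n : ℕ} (A : Matrix (Fin n) (Fin n) ℤ) : Prop :=
  ∀ i j, i ≠ j → 4 ≤ A i j * A j i

/-- A square rational matrix is symmetrizable if it is the product of an invertible
diagonal matrix and a symmetric matrix. -/
def IsSymmetrizable {n : ℕ} (A : Matrix (Fin n) (Fin n) ℚ) : Prop :=
  ∃ D B : Matrix (Fin n) (Fin n) ℚ, D.IsDiag ∧ IsUnit D ∧ B.IsSymm ∧ A = D * B

/-- A symmetrizable 3×3 matrix satisfies the 3-cycle condition. -/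
lemma cycle_of_symmetrizable (M : Matrix (Fin 3) (Fin 3) ℚ)
    (h : IsSymmetrizable M) :
    M 0 1 * M 1 2 * M 2 0 = M 1 0 * M 2 1 * M 0 2 := by
  obtain ⟨D, B, hD, _, hB, hM⟩ := h
  have e : ∀ p q, M p q = D p p * B p q := by
    intro p q
    rw [hM, Matrix.mul_apply,
      Finset.sum_eq_single p (fun b _ hb => by rw [hD (Ne.symm hb), zero_mul])
        (fun h => absurd (Finset.mem_univ p) h)]
  rw [e, e, e, e, e, e, show B 1 0 = B 0 1 from hB.apply 0 1,
    show B 2 1 = B 1 2 from hB.apply 1 2, show B 0 2 = B 2 0 from hB.apply 2 0]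
  ring

/-- Construction of a symmetrization from the 3-cycle conditions, when all entries
in the row and column of a fixed index `z` are nonzero off the diagonal. -/
lemma symmetrizable_of_cycles {n : ℕ} (M : Matrix (Fin n) (Fin n) ℚ) (z : Fin n)
    (hz : ∀ i, i ≠ z → M i z ≠ 0 ∧ M z i ≠ 0)
    (hc : ∀ i j, M i j * M j z * M z i = M j i * M i z * M z j) :
    IsSymmetrizable M := by
  set d : Fin n → ℚ := fun i => if i = z then 1 else M i z / M z i with hd_def
  have hd : ∀ i, d i ≠ 0 := by
    intro i
    by_cases hi : i = z
    · simp [hd_def, hi]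
    · simp only [hd_def, if_neg hi]
      exact div_ne_zero (hz i hi).1 (hz i hi).2
  refine ⟨Matrix.diagonal d, Matrix.of (fun i j => (d i)⁻¹ * M i j),
    Matrix.isDiag_diagonal d, ?_, ?_, ?_⟩
  · rw [Matrix.isUnit_iff_isUnit_det, Matrix.det_diagonal]
    exact isUnit_iff_ne_zero.mpr (Finset.prod_ne_zero_iff.mpr fun i _ => hd i)
  · rw [Matrix.IsSymm]
    ext i j
    rw [Matrix.transpose_apply]
    show (d j)⁻¹ * M j i = (d i)⁻¹ * M i j
    have key : M j i * d i = M i j * d j := by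
      by_cases hij : i = j
      · subst hij; ring
      by_cases hiz : i = z
      · have hjz : j ≠ z := fun h => hij (hiz.trans h.symm)
        have h2 := (hz j hjz).2
        simp only [hd_def, if_pos hiz, if_neg hjz]
        rw [hiz]
        field_simp
      by_cases hjz : j = z
      · have h1 := (hz i hiz).2
        simp only [hd_def, if_pos hjz, if_neg hiz]
        rw [hjz]
        field_simp
      · have h1 := (hz i hiz).2
        have h2 := (hz j hjz).2
        simp only [hd_def, if_neg hiz, if_neg hjz]
        field_simp
        linear_combination -hc i j
    have hdi := hd i
    have hdj := hd j
    field_simp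
    linear_combination key
  · ext i j
    rw [Matrix.diagonal_mul]
    show M i j = d i * ((d i)⁻¹ * M i j)
    rw [← mul_assoc, mul_inv_cancel₀ (hd i), one_mul]

/-- If `A` is a non-symmetrizable generic Cartan matrix of size `n ≥ 3`, then some
`3 × 3` principal submatrix `A_{{i,j,k}}` with `i < j < k` is non-symmetrizable. -/
theorem exists_nonsymmetrizable_principal_submatrix
    {n : ℕ} (hn : 3 ≤ n) (A : Matrix (Fin n) (Fin n) ℤ)
    (hC : IsCartanMatrix A) (hG : IsGenericCartan A)
    (hns : ¬ IsSymmetrizable (A.map (Int.cast : ℤ → ℚ))) :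
    ∃ i j k : Fin n, i < j ∧ j < k ∧
      ¬ IsSymmetrizable ((A.submatrix ![i, j, k] ![i, j, k]).map (Int.cast : ℤ → ℚ)) := by
  by_contra hcon
  push_neg at hcon
  -- all sorted 3-cycle conditions
  have key : ∀ a b c : Fin n, a < b → b < c →
      (A a b : ℚ) * A b c * A c a = A b a * A c b * A a c := by
    intro a b c hab hbc
    have h := cycle_of_symmetrizable _ (hcon a b c hab hbc)
    simp only [Matrix.map_apply, Matrix.submatrix_apply] at h
    simpa using h
  -- all 3-cycle conditions
  have cyc : ∀ i j k : Fin n,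
      (A i j : ℚ) * A j k * A k i = A j i * A k j * A i k := by
    intro i j k
    by_cases h1 : i = j
    · subst h1; ring
    by_cases h2 : j = k
    · subst h2; ring
    by_cases h3 : i = k
    · subst h3; ring
    rcases Ne.lt_or_gt h1 with hij | hij <;>
      rcases Ne.lt_or_gt h2 with hjk | hjk <;>
      rcases Ne.lt_or_gt h3 with hik | hik
    · linear_combination key i j k hij hjk
    · exact absurd (hij.trans hjk) (asymm hik)
    · linear_combination -key i k j hik hjk
    · linear_combination key k i j hik hij
    · linear_combination -key j i k hij hik
    · linear_combination key j k i hjk hik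
    · exact absurd (hjk.trans hij) (asymm hik)
    · linear_combination -key k j i hjk hij
  -- nonzero off-diagonal entries
  have hne : ∀ i j : Fin n, i ≠ j → ((A i j : ℚ)) ≠ 0 := by
    intro i j hij
    have h4 := hG i j hij
    have : A i j ≠ 0 := by intro h; rw [h] at h4; omega
    exact_mod_cast this
  have hz : Fin n := ⟨0, by omega⟩
  apply hns
  apply symmetrizable_of_cycles _ hz
  · intro i hi
    constructor <;> simp only [Matrix.map_apply]
    · exact hne i hz hi
    · exact hne hz i (Ne.symm hi)
  · intro i j
    simp only [Matrix.map_apply]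
    linear_combination cyc i j hz
end

section
/- Let R be a ring which is ℤ/2-graded: R = R₀ ⊕ R₁ as additive groups with R₀·R₀ ⊆ R₀, R₀·R₁ ⊆ R₁, R₁·R₀ ⊆ R₁ and R₁·R₁ ⊆ R₀. Assume that R₀ is a commutative integral domain and that R₁ is torsion-free as an R₀-module (if a ∈ R₀ and x ∈ R₁ satisfy a·x = 0, then a = 0 or x = 0). If every element of R₁ is nilpotent, then b₁·b₂ = 0 for all b₁, b₂ ∈ R₁. -/
/-- Let `R = R₀ ⊕ R₁` be a `ℤ/2`-graded ring in which `R₀` is a commutative integral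
domain and `R₁` is a torsion-free `R₀`-module. If every element of `R₁` is nilpotent,
then the product of any two elements of `R₁` vanishes. -/
theorem mul_eq_zero_of_odd_nilpotent
    {R : Type*} [Ring R] (R₀ R₁ : AddSubgroup R)
    -- `R = R₀ ⊕ R₁` as additive groups:
    (hsum : ∀ x : R, ∃ x₀ ∈ R₀, ∃ x₁ ∈ R₁, x = x₀ + x₁)
    (hdisj : ∀ x ∈ R₀, x ∈ R₁ → x = 0)
    -- grading conditions on multiplication:
    (h00 : ∀ a ∈ R₀, ∀ b ∈ R₀, a * b ∈ R₀)
    (h01 : ∀ a ∈ R₀, ∀ b ∈ R₁, a * b ∈ R₁)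
    (h10 : ∀ a ∈ R₁, ∀ b ∈ R₀, a * b ∈ R₁)
    (h11 : ∀ a ∈ R₁, ∀ b ∈ R₁, a * b ∈ R₀)
    -- `R₀` is a commutative integral domain:
    (hone : (1 : R) ∈ R₀)
    (hnt : (1 : R) ≠ 0)
    (hcomm : ∀ a ∈ R₀, ∀ b ∈ R₀, a * b = b * a)
    (hdom : ∀ a ∈ R₀, ∀ b ∈ R₀, a * b = 0 → a = 0 ∨ b = 0)
    -- `R₁` is torsion-free as an `R₀`-module:
    (htf : ∀ a ∈ R₀, ∀ x ∈ R₁, a * x = 0 → a = 0 ∨ x = 0)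
    -- every element of `R₁` is nilpotent:
    (hnil : ∀ x ∈ R₁, IsNilpotent x) :
    ∀ b₁ ∈ R₁, ∀ b₂ ∈ R₁, b₁ * b₂ = 0 := by
  intro b₁ hb1 b₂ hb2
  by_cases hb20 : b₂ = 0
  · simp [hb20]
  classical
  obtain ⟨k, hk⟩ := hnil b₂ hb2
  have hex : ∃ n, b₂ ^ n = 0 := ⟨k, hk⟩
  set m := Nat.find hex with hmdef
  have hm : b₂ ^ m = 0 := Nat.find_spec hex
  have hm2 : 2 ≤ m := by
    by_contra h
    interval_cases m
    · simp at hm; exact hnt hm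
    · simp at hm; exact hb20 hm
  obtain ⟨j, hj⟩ : ∃ j, m = j + 2 := ⟨m - 2, by omega⟩
  have hne : b₂ ^ (j + 1) ≠ 0 := Nat.find_min hex (by omega)
  have ha0 : b₁ * b₂ ∈ R₀ := h11 b₁ hb1 b₂ hb2
  have key : (b₁ * b₂) * b₂ ^ (j + 1) = 0 := by
    have : (b₁ * b₂) * b₂ ^ (j + 1) = b₁ * b₂ ^ m := by
      rw [hj, mul_assoc, ← pow_succ']
    rw [this, hm, mul_zero]
  have hmem : ∀ n, b₂ ^ (n + 1) ∈ R₀ ∨ b₂ ^ (n + 1) ∈ R₁ := by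
    intro n
    induction n with
    | zero => right; simpa using hb2
    | succ i ih =>
      rcases ih with h | h
      · right
        have := h01 _ h _ hb2
        simpa [pow_succ] using this
      · left
        have := h11 _ h _ hb2
        simpa [pow_succ] using this
  rcases hmem j with h | h
  · rcases hdom _ ha0 _ h key with h' | h'
    · exact h'
    · exact absurd h' hne
  · rcases htf _ ha0 _ h key with h' | h'
    · exact h'
    · exact absurd h' hne
end

section
/- Let n ≥ 3 and i ≥ 2 be integers. In the formal power series ring ℚ[[t]], the power series F = (1 − (n−1)·t) · ((1−t)^{n−1} · (1−t²))⁻¹ (the inverse exists since (1−t)^{n−1}·(1−t²) has constant term 1) satisfies: the coefficient of t^i in F equals −Σ_{k=0}^{⌊i/2⌋} (i − 1 − 2k) · C(n + i − 2k − 3, n − 3), where C(·,·) denotes the binomial coefficient. -/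
open PowerSeries

private lemma aux_inv_one_sub_pow (d : ℕ) :
    ((1 - X : ℚ⟦X⟧) ^ d)⁻¹ = (PowerSeries.invOneSubPow ℚ d).val := by
  symm
  rw [PowerSeries.eq_inv_iff_mul_eq_one (by simp [map_pow])]
  rw [← PowerSeries.invOneSubPow_inv_eq_one_sub_pow]
  exact (PowerSeries.invOneSubPow ℚ d).val_inv

private lemma aux_key_identity (m j : ℕ) :
    ((m + 1 + (j + 1)).choose (m + 1) : ℤ) - (m + 2) * ((m + 1 + j).choose (m + 1) : ℤ)
      = (1 - ((j : ℤ) + 1)) * (((j + 1 + m).choose m : ℤ)) := by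
  have h2 : m + 1 + j - m = j + 1 := by omega
  have h1 : ((m + 1 + j).choose (m + 1) : ℤ) * (m + 1)
      = ((m + 1 + j).choose m : ℤ) * (j + 1) := by
    have := Nat.choose_succ_right_eq (m + 1 + j) m
    rw [h2] at this
    exact_mod_cast this
  have h3 : (m + 1 + (j + 1)).choose (m + 1)
      = (m + 1 + j).choose m + (m + 1 + j).choose (m + 1) := by
    rw [show m + 1 + (j + 1) = (m + 1 + j) + 1 from by omega]
    exact Nat.choose_succ_succ _ _
  rw [show j + 1 + m = m + 1 + j from by omega, h3]
  push_cast
  linear_combination -h1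

private lemma aux_coeff_P (m j : ℕ) :
    (PowerSeries.coeff (R := ℚ) j) ((1 - PowerSeries.C (R := ℚ) ((m : ℚ) + 2) * X) *
        ((1 - X : ℚ⟦X⟧) ^ (m + 2))⁻¹)
      = (((1 - (j : ℤ)) * ((j + m).choose m : ℤ) : ℤ) : ℚ) := by
  rw [aux_inv_one_sub_pow, show m + 2 = (m + 1) + 1 from rfl,
    PowerSeries.invOneSubPow_val_succ_eq_mk_add_choose]
  rw [sub_mul, one_mul, map_sub, mul_assoc, PowerSeries.coeff_C_mul]
  cases j with
  | zero => simp
  | succ j =>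
    rw [PowerSeries.coeff_succ_X_mul, PowerSeries.coeff_mk, PowerSeries.coeff_mk]
    have := aux_key_identity m j
    have hq : ((m + 1 + (j + 1)).choose (m + 1) : ℚ) - ((m : ℚ) + 2) * ((m + 1 + j).choose (m + 1) : ℚ)
        = (1 - ((j : ℚ) + 1)) * (((j + 1 + m).choose m : ℚ)) := by exact_mod_cast this
    push_cast
    push_cast at hq
    linarith [hq]

/-- The coefficient of `t^i` (for `i ≥ 2`, `n ≥ 3`) in the formal power series
`(1 - (n-1)t) / ((1-t)^{n-1} (1-t²))` equals
`-∑_{k=0}^{⌊i/2⌋} (i - 1 - 2k) * C(n + i - 2k - 3, n - 3)`. -/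
theorem coeff_nonsymmetrizable_series (n i : ℕ) (hn : 3 ≤ n) (hi : 2 ≤ i) :
    PowerSeries.coeff (R := ℚ) i
      ((1 - PowerSeries.C (R := ℚ) ((n : ℚ) - 1) * PowerSeries.X) *
        ((1 - PowerSeries.X) ^ (n - 1) * (1 - PowerSeries.X ^ 2))⁻¹)
    = ((-(∑ k ∈ Finset.range (i / 2 + 1),
          ((i : ℤ) - 1 - 2 * (k : ℤ)) * ((n + i - 2 * k - 3).choose (n - 3) : ℤ)) : ℤ) : ℚ) := by
  obtain ⟨m, rfl⟩ := Nat.exists_eq_add_of_le hn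
  set N : ℚ⟦X⟧ := 1 - PowerSeries.C (R := ℚ) (((3 + m : ℕ) : ℚ) - 1) * X with hN
  set F : ℚ⟦X⟧ := N * ((1 - X) ^ (3 + m - 1) * (1 - X ^ 2))⁻¹ with hF
  have hNval : N = 1 - PowerSeries.C (R := ℚ) ((m : ℚ) + 2) * X := by
    rw [hN, show (((3 + m : ℕ) : ℚ) - 1) = ((m : ℚ) + 2) from by push_cast; ring]
  have hpow : 3 + m - 1 = m + 2 := by omega
  -- the key relation F * (1 - X^2) = N * ((1-X)^(m+2))⁻¹
  have hFP : F * (1 - X ^ 2) = N * ((1 - X : ℚ⟦X⟧) ^ (m + 2))⁻¹ := by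
    have h2 : (1 - X ^ 2 : ℚ⟦X⟧)⁻¹ * (1 - X ^ 2) = 1 :=
      PowerSeries.inv_mul_cancel _ (by simp)
    calc N * ((1 - X) ^ (3 + m - 1) * (1 - X ^ 2))⁻¹ * (1 - X ^ 2)
        = N * ((1 - X : ℚ⟦X⟧) ^ (m + 2))⁻¹ * ((1 - X ^ 2 : ℚ⟦X⟧)⁻¹ * (1 - X ^ 2)) := by
          rw [hpow, PowerSeries.mul_inv_rev]; ring
      _ = N * ((1 - X : ℚ⟦X⟧) ^ (m + 2))⁻¹ := by rw [h2, mul_one]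
  have hcoeffP : ∀ j : ℕ, PowerSeries.coeff (R := ℚ) j (N * ((1 - X : ℚ⟦X⟧) ^ (m + 2))⁻¹)
      = (((1 - (j : ℤ)) * ((j + m).choose m : ℤ) : ℤ) : ℚ) := by
    intro j; rw [hNval]; exact aux_coeff_P m j
  -- coefficients of F * (1 - X^2)
  have hsplit : F * (1 - X ^ 2) = F - X ^ 2 * F := by ring
  have hrel : ∀ j : ℕ, PowerSeries.coeff (R := ℚ) (j + 2) F
      = PowerSeries.coeff (R := ℚ) j F + (((1 - ((j : ℤ) + 2)) * ((j + 2 + m).choose m : ℤ) : ℤ) : ℚ) := by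
    intro j
    have h := congrArg (PowerSeries.coeff (R := ℚ) (j + 2)) hFP
    rw [hsplit, map_sub, PowerSeries.coeff_X_pow_mul, hcoeffP] at h
    have : ((j + 2 : ℕ) : ℤ) = (j : ℤ) + 2 := by push_cast; ring
    rw [this] at h
    linarith [h]
  have h0 : PowerSeries.coeff (R := ℚ) 0 F = 1 := by
    have h := congrArg (PowerSeries.coeff (R := ℚ) 0) hFP
    rw [hsplit, map_sub, PowerSeries.coeff_X_pow_mul' F 2 0, hcoeffP] at h
    simpa using h
  have h1 : PowerSeries.coeff (R := ℚ) 1 F = 0 := by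
    have h := congrArg (PowerSeries.coeff (R := ℚ) 1) hFP
    rw [hsplit, map_sub, PowerSeries.coeff_X_pow_mul' F 2 1, hcoeffP] at h
    simpa using h
  -- the sum
  set S : ℕ → ℤ := fun i => ∑ k ∈ Finset.range (i / 2 + 1),
      ((i : ℤ) - 1 - 2 * (k : ℤ)) * (((3 + m) + i - 2 * k - 3).choose ((3 + m) - 3) : ℤ) with hS
  have main : ∀ i : ℕ, PowerSeries.coeff (R := ℚ) i F = ((-(S i) : ℤ) : ℚ) := by
    intro i
    induction i using Nat.strong_induction_on with
    | _ i ih =>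
      match i with
      | 0 =>
        rw [h0, hS]
        norm_num
      | 1 =>
        rw [h1, hS]
        norm_num
      | (j + 2) =>
        have hSrec : S (j + 2) = S j + ((j : ℤ) + 1) * (((m + j + 2).choose m : ℤ)) := by
          rw [hS]
          simp only
          rw [show (j + 2) / 2 + 1 = (j / 2 + 1) + 1 from by omega]
          rw [Finset.sum_range_succ']
          congr 1
          · apply Finset.sum_congr rfl
            intro k _
            rw [show (3 + m) + (j + 2) - 2 * (k + 1) - 3 = (3 + m) + j - 2 * k - 3 from by omega]
            push_cast
            ring
          · rw [show (3 + m) + (j + 2) - 2 * 0 - 3 = m + j + 2 from by omega,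
              show (3 + m) - 3 = m from by omega]
            push_cast
            ring
        rw [hrel j, ih j (by omega), hSrec]
        rw [show j + 2 + m = m + j + 2 from by omega]
        push_cast
        ring
  exact main i
end

section
/- Let n ≥ 3 and i ≥ 2 be integers. Then the integer a_{2i} := Σ_{k=0}^{⌊i/2⌋} (i − 1 − 2k) · C(n + i − 2k − 3, n − 3) is nonnegative, where C(·,·) denotes the binomial coefficient and the terms with i − 1 − 2k < 0 are taken with their (negative) sign in ℤ. -/
/-- For `n ≥ 3` and `i ≥ 2`, the integer
`a_{2i} = ∑_{k=0}^{⌊i/2⌋} (i - 1 - 2k) * C(n + i - 2k - 3, n - 3)`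
(where terms with `i - 1 - 2k < 0` are taken with their negative sign in `ℤ`)
is nonnegative. -/
theorem a2i_nonneg (n i : ℕ) (hn : 3 ≤ n) (hi : 2 ≤ i) :
    0 ≤ ∑ k ∈ Finset.range (i / 2 + 1),
        ((i : ℤ) - 1 - 2 * (k : ℤ)) * ((n + i - 2 * k - 3).choose (n - 3) : ℤ) := by
  rcases Nat.even_or_odd i with ⟨j, rfl⟩ | ho
  · -- even case: i = j + j, j ≥ 1
    obtain ⟨m, rfl⟩ : ∃ m, j = m + 1 := ⟨j - 1, by omega⟩
    have hdiv : ((m + 1) + (m + 1)) / 2 = m + 1 := by omega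
    rw [hdiv, Finset.sum_range_succ, Finset.sum_range_succ]
    have hlast : (n + (m + 1 + (m + 1)) - 2 * (m + 1) - 3) = n - 3 := by omega
    have hsnd : (n + (m + 1 + (m + 1)) - 2 * m - 3) = n - 1 := by omega
    rw [hlast, hsnd, Nat.choose_self]
    have hmid : 0 ≤ ∑ k ∈ Finset.range m,
        (((m + 1 + (m + 1) : ℕ) : ℤ) - 1 - 2 * (k : ℤ)) *
          ((n + (m + 1 + (m + 1)) - 2 * k - 3).choose (n - 3) : ℤ) := by
      apply Finset.sum_nonneg
      intro k hk
      have hk' : k < m := Finset.mem_range.mp hk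
      have h1 : (0 : ℤ) ≤ ((m + 1 + (m + 1) : ℕ) : ℤ) - 1 - 2 * (k : ℤ) := by
        push_cast; omega
      positivity
    have hco : (1 : ℤ) ≤ ((n - 1).choose (n - 3) : ℤ) := by
      exact_mod_cast Nat.one_le_iff_ne_zero.mpr
        (Nat.choose_pos (by omega : n - 3 ≤ n - 1)).ne'
    have hc1 : (((m + 1 + (m + 1) : ℕ) : ℤ) - 1 - 2 * ((m : ℤ))) = 1 := by
      push_cast; ring
    have hc2 : (((m + 1 + (m + 1) : ℕ) : ℤ) - 1 - 2 * (((m + 1 : ℕ) : ℤ))) = -1 := by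
      push_cast; ring
    rw [hc1, hc2]
    push_cast at hmid ⊢
    linarith
  · -- odd case: all terms nonnegative
    apply Finset.sum_nonneg
    intro k hk
    have hk' : k < i / 2 + 1 := Finset.mem_range.mp hk
    obtain ⟨j, rfl⟩ := ho
    have h1 : (0 : ℤ) ≤ ((2 * j + 1 : ℕ) : ℤ) - 1 - 2 * (k : ℤ) := by
      push_cast; omega
    positivity
end

section
/- Let n₁, n₂ ≥ 2 be integers and ε₁, ε₂ ∈ {0, 1}. If the equality (1 − (n₁−1)q²) / ((1−q²)^{n₁−1}(1−q⁴)^{ε₁}) = (1 − (n₂−1)q²) / ((1−q²)^{n₂−1}(1−q⁴)^{ε₂}) holds in the field ℚ(q) of rational functions over ℚ, then n₁ = n₂ and ε₁ = ε₂. -/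
section KMAux
open Polynomial

private lemma km_natDegree_aux (c : ℚ) (hc : c ≠ 0) :
    (1 - C c * X ^ 2 : ℚ[X]).natDegree = 2 := by compute_degree!

private lemma km_lead_aux (c : ℚ) (hc : c ≠ 0) :
    (1 - C c * X ^ 2 : ℚ[X]).leadingCoeff = -c := by
  rw [leadingCoeff, km_natDegree_aux c hc]
  simp [coeff_one]

private lemma km_lead_aux4 : (1 - X ^ 4 : ℚ[X]).leadingCoeff = -1 := by
  have hd : (1 - X ^ 4 : ℚ[X]).natDegree = 4 := by compute_degree!
  rw [leadingCoeff, hd]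
  simp [coeff_one]

private lemma km_natDegree_aux4 : (1 - X ^ 4 : ℚ[X]).natDegree = 4 := by compute_degree!

private lemma km_main
    (n₁ n₂ : ℕ) (hn₁ : 2 ≤ n₁) (hn₂ : 2 ≤ n₂)
    (ε₁ ε₂ : ℕ) (hε₁ : ε₁ ≤ 1) (hε₂ : ε₂ ≤ 1)
    (h : (1 - ((n₁ : RatFunc ℚ) - 1) * RatFunc.X ^ 2) /
          ((1 - RatFunc.X ^ 2) ^ (n₁ - 1) * (1 - RatFunc.X ^ 4) ^ ε₁)
        = (1 - ((n₂ : RatFunc ℚ) - 1) * RatFunc.X ^ 2) /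
          ((1 - RatFunc.X ^ 2) ^ (n₂ - 1) * (1 - RatFunc.X ^ 4) ^ ε₂)) :
    n₁ = n₂ ∧ ε₁ = ε₂ := by
  -- basic nonvanishing facts in `ℚ[X]`
  have hX2 : (1 : ℚ[X]) - X ^ 2 ≠ 0 := fun hc => by
    have := congrArg (fun p => Polynomial.eval 0 p) hc; simp at this
  have hX4 : (1 : ℚ[X]) - X ^ 4 ≠ 0 := fun hc => by
    have := congrArg (fun p => Polynomial.eval 0 p) hc; simp at this
  -- transfer the equation from `RatFunc ℚ` to `ℚ[X]`
  have hpoly : (1 - ((n₁ : ℚ[X]) - 1) * X ^ 2) * ((1 - X ^ 2) ^ (n₂ - 1) * (1 - X ^ 4) ^ ε₂)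
      = (1 - ((n₂ : ℚ[X]) - 1) * X ^ 2) * ((1 - X ^ 2) ^ (n₁ - 1) * (1 - X ^ 4) ^ ε₁) := by
    set φ := algebraMap ℚ[X] (RatFunc ℚ)
    have hinj : Function.Injective φ := IsFractionRing.injective ℚ[X] (RatFunc ℚ)
    have hd : ∀ m e : ℕ, ((1 - RatFunc.X ^ 2) ^ m * (1 - RatFunc.X ^ 4) ^ e : RatFunc ℚ) ≠ 0 := by
      intro m e
      have := (map_ne_zero_iff φ hinj).2 (mul_ne_zero (pow_ne_zero m hX2) (pow_ne_zero e hX4))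
      simpa [φ, map_mul, map_sub, map_pow, RatFunc.algebraMap_X] using this
    rw [div_eq_div_iff (hd _ _) (hd _ _)] at h
    apply hinj
    simpa [φ, map_mul, map_sub, map_pow, map_natCast, RatFunc.algebraMap_X] using h
  -- rewrite the coefficients as `C` of rationals
  have hc₁ : ((n₁ : ℚ[X]) - 1) = C ((n₁ : ℚ) - 1) := by
    rw [map_sub, map_one, Polynomial.C_eq_natCast]
  have hc₂ : ((n₂ : ℚ[X]) - 1) = C ((n₂ : ℚ) - 1) := by
    rw [map_sub, map_one, Polynomial.C_eq_natCast]
  rw [hc₁, hc₂] at hpoly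
  set a : ℚ := (n₁ : ℚ) - 1 with ha_def
  set b : ℚ := (n₂ : ℚ) - 1 with hb_def
  have ha1 : (1 : ℚ) ≤ a := by
    have : (2 : ℚ) ≤ (n₁ : ℚ) := by exact_mod_cast hn₁
    rw [ha_def]; linarith
  have hb1 : (1 : ℚ) ≤ b := by
    have : (2 : ℚ) ≤ (n₂ : ℚ) := by exact_mod_cast hn₂
    rw [hb_def]; linarith
  have ha : a ≠ 0 := by linarith
  have hb : b ≠ 0 := by linarith
  have hP₁ : (1 - C a * X ^ 2 : ℚ[X]) ≠ 0 := fun hc => by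
    have := km_lead_aux a ha; rw [hc] at this; simp at this; exact ha this
  have hP₂ : (1 - C b * X ^ 2 : ℚ[X]) ≠ 0 := fun hc => by
    have := km_lead_aux b hb; rw [hc] at this; simp at this; exact hb this
  -- compare leading coefficients: this forces `a = b`, hence `n₁ = n₂`
  have hX2l : (1 - X ^ 2 : ℚ[X]).leadingCoeff = -1 := by
    have := km_lead_aux 1 one_ne_zero; simpa using this
  have hlead := congrArg Polynomial.leadingCoeff hpoly
  simp only [leadingCoeff_mul, leadingCoeff_pow, km_lead_aux a ha, km_lead_aux b hb,
    hX2l, km_lead_aux4] at hlead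
  have habs := congrArg abs hlead
  simp only [abs_mul, abs_pow, abs_neg, abs_one, one_pow, mul_one] at habs
  have hab : a = b := by
    rwa [abs_of_pos (by linarith : (0:ℚ) < a), abs_of_pos (by linarith : (0:ℚ) < b)] at habs
  have hn : n₁ = n₂ := by
    have : (n₁ : ℚ) = (n₂ : ℚ) := by
      rw [ha_def, hb_def] at hab; linarith
    exact_mod_cast this
  refine ⟨hn, ?_⟩
  -- compare degrees: this forces `ε₁ = ε₂`
  have hdeg := congrArg Polynomial.natDegree hpoly
  rw [natDegree_mul hP₁ (mul_ne_zero (pow_ne_zero _ hX2) (pow_ne_zero _ hX4)),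
    natDegree_mul hP₂ (mul_ne_zero (pow_ne_zero _ hX2) (pow_ne_zero _ hX4)),
    natDegree_mul (pow_ne_zero _ hX2) (pow_ne_zero _ hX4),
    natDegree_mul (pow_ne_zero _ hX2) (pow_ne_zero _ hX4),
    natDegree_pow, natDegree_pow, natDegree_pow, natDegree_pow,
    km_natDegree_aux a ha, km_natDegree_aux b hb, km_natDegree_aux4] at hdeg
  have hX2d : (1 - X ^ 2 : ℚ[X]).natDegree = 2 := by
    have := km_natDegree_aux 1 one_ne_zero; simpa using this
  rw [hX2d] at hdeg
  omega

end KMAux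

open RatFunc

/-- The rational function `(1 - (n-1)q²) / ((1-q²)^{n-1} (1-q⁴)^ε)` (the reciprocal of
the even-homology Poincaré series of a generic Kac–Moody group) determines the pair
`(n, ε)` for `n ≥ 2` and `ε ∈ {0, 1}`. -/
theorem poincare_series_determines_parameters
    (n₁ n₂ : ℕ) (hn₁ : 2 ≤ n₁) (hn₂ : 2 ≤ n₂)
    (ε₁ ε₂ : ℕ) (hε₁ : ε₁ ≤ 1) (hε₂ : ε₂ ≤ 1)
    (h : (1 - ((n₁ : RatFunc ℚ) - 1) * RatFunc.X ^ 2) /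
          ((1 - RatFunc.X ^ 2) ^ (n₁ - 1) * (1 - RatFunc.X ^ 4) ^ ε₁)
        = (1 - ((n₂ : RatFunc ℚ) - 1) * RatFunc.X ^ 2) /
          ((1 - RatFunc.X ^ 2) ^ (n₂ - 1) * (1 - RatFunc.X ^ 4) ^ ε₂)) :
    n₁ = n₂ ∧ ε₁ = ε₂ := by
  exact km_main n₁ n₂ hn₁ hn₂ ε₁ ε₂ hε₁ hε₂ h
end
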